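/- Let v: [0,1] → ℝ^n be an affine path V_τ = τ w + (1−τ) v₀ and let Φ: ℝ → ℝ≥0 be convex, nondecreasing, with Φ(ξ) = (ξ − L)_+ for some L ≥ 0. Then the function τ ↦ Φ²(|V_τ|²) is convex on [0,1]. In particular, Φ²(|w|²) − Φ²(|v₀|²) ≥ 4 Φ(|v₀|²) Φ'(|v₀|²) ⟨v₀, w − v₀⟩, i.e. 4 (Φ Φ')(|v₀|²) ⟨v₀, v₀ − w⟩ ≥ Φ²(|v₀|²) − Φ²(|w|²), where Φ'(ξ) = 𝟙_{ξ ≥ L}. -/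

import Mathlib

/-!
With `Φ(ξ) = (ξ - L)₊`, the function `Φ²` is convex (the square of a nonnegative convex function)
and nondecreasing, and `‖·‖²` is convex, so `Φ²(‖·‖²)` is convex and stays so along the affine path
`τ ↦ τ w + (1 - τ) v₀`. For the inequality, since `Φ Φ' = Φ` the right-hand side is
`2 Φ(|v₀|²) · 2⟨v₀, w - v₀⟩`; chain the tangent-line inequality `Φ²(b) - Φ²(a) ≥ 2 Φ(a) (b - a)`
with `|w|² - |v₀|² ≥ 2⟨v₀, w - v₀⟩`.
-/

open Set

theorem ConvexOn.comp_of_monotone {E : Type*} [AddCommGroup E] [Module ℝ E] {s : Set E}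
    {f : E → ℝ} {g : ℝ → ℝ} (hg : ConvexOn ℝ univ g) (hg_mono : Monotone g)
    (hf : ConvexOn ℝ s f) : ConvexOn ℝ s (g ∘ f) :=
  ⟨hf.1, fun _ hx _ hy _ _ ha hb hab =>
    (hg_mono (hf.2 hx hy ha hb hab)).trans (hg.2 trivial trivial ha hb hab)⟩

theorem convexOn_sq_max_sub (L : ℝ) : ConvexOn ℝ univ (fun ξ : ℝ => max (ξ - L) 0 ^ 2) := by
  have hΦ : ConvexOn ℝ univ (fun ξ : ℝ => max (ξ - L) 0) :=
    ((convexOn_id convex_univ).sub (concaveOn_const L convex_univ)).sup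
      (convexOn_const 0 convex_univ)
  exact hΦ.pow (fun _ _ => le_max_right _ _) 2

theorem monotone_sq_max_sub (L : ℝ) : Monotone (fun ξ : ℝ => max (ξ - L) 0 ^ 2) :=
  fun _ _ h => pow_le_pow_left₀ (le_max_right _ _) (max_le_max (sub_le_sub_right h L) le_rfl) 2

theorem convexOn_sq_max_norm_sq_sub {E : Type*} [SeminormedAddCommGroup E] [NormedSpace ℝ E]
    (L : ℝ) : ConvexOn ℝ univ (fun x : E => max (‖x‖ ^ 2 - L) 0 ^ 2) :=
  (convexOn_sq_max_sub L).comp_of_monotone (monotone_sq_max_sub L)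
    (convexOn_univ_norm.pow (fun _ _ => norm_nonneg _) 2)

theorem two_mul_max_sub_mul_sub_le_sq_max_sub (L a b : ℝ) :
    2 * max (a - L) 0 * (b - a) ≤ max (b - L) 0 ^ 2 - max (a - L) 0 ^ 2 := by
  rcases le_total a L with ha | ha <;> rcases le_total b L with hb | hb
  all_goals
    simp only [max_eq_left, max_eq_right, sub_nonneg, sub_nonpos, ha, hb]
    nlinarith [sq_nonneg (b - a), sq_nonneg (a - L)]

theorem max_sub_mul_ite_eq (L a : ℝ) :
    max (a - L) 0 * (if L ≤ a then (1 : ℝ) else 0) = max (a - L) 0 := by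
  split_ifs with h
  · exact mul_one _
  · rw [max_eq_right (by linarith), zero_mul]

theorem two_mul_inner_sub_le_norm_sq_sub {E : Type*} [NormedAddCommGroup E]
    [InnerProductSpace ℝ E] (v w : E) : 2 * inner ℝ v (w - v) ≤ ‖w‖ ^ 2 - ‖v‖ ^ 2 := by
  have h := norm_sub_sq_real w v
  rw [inner_sub_right, real_inner_self_eq_norm_sq, real_inner_comm]
  nlinarith [sq_nonneg ‖w - v‖]

theorem stmt3_general (n : ℕ) (L : ℝ) (v₀ w : EuclideanSpace ℝ (Fin n)) :
    ConvexOn ℝ (Set.Icc (0:ℝ) 1)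
      (fun τ : ℝ => (max (‖τ • w + (1 - τ) • v₀‖^2 - L) 0)^2) ∧
    (max (‖w‖^2 - L) 0)^2 - (max (‖v₀‖^2 - L) 0)^2 ≥
      4 * (max (‖v₀‖^2 - L) 0) * (if L ≤ ‖v₀‖^2 then (1:ℝ) else 0) *
        (inner ℝ v₀ (w - v₀) : ℝ) ∧
    4 * (max (‖v₀‖^2 - L) 0) * (if L ≤ ‖v₀‖^2 then (1:ℝ) else 0) *
        (inner ℝ v₀ (v₀ - w) : ℝ) ≥
      (max (‖v₀‖^2 - L) 0)^2 - (max (‖w‖^2 - L) 0)^2 := by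
  have hpath : ConvexOn ℝ (Set.Icc (0:ℝ) 1)
      (fun τ : ℝ => (max (‖τ • w + (1 - τ) • v₀‖^2 - L) 0)^2) := by
    refine (((convexOn_sq_max_norm_sq_sub L).comp_affineMap (AffineMap.lineMap v₀ w)).subset
      (subset_univ _) (convex_Icc 0 1)).congr fun τ _ => ?_
    simp only [Function.comp_apply, AffineMap.lineMap_apply_module, add_comm]
  have htangent :
      4 * max (‖v₀‖^2 - L) 0 * (if L ≤ ‖v₀‖^2 then (1:ℝ) else 0) * inner ℝ v₀ (w - v₀)
        ≤ max (‖w‖^2 - L) 0 ^ 2 - max (‖v₀‖^2 - L) 0 ^ 2 :=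
    calc _ = 2 * max (‖v₀‖^2 - L) 0 * (2 * inner ℝ v₀ (w - v₀)) := by
            rw [mul_assoc 4, max_sub_mul_ite_eq]; ring
      _ ≤ 2 * max (‖v₀‖^2 - L) 0 * (‖w‖^2 - ‖v₀‖^2) :=
            mul_le_mul_of_nonneg_left (two_mul_inner_sub_le_norm_sq_sub v₀ w) (by positivity)
      _ ≤ _ := two_mul_max_sub_mul_sub_le_sq_max_sub L _ _
  refine ⟨hpath, htangent, ?_⟩
  rw [← neg_sub w v₀, inner_neg_right]
  linarith

/-- with `Φ(ξ) = (ξ - L)₊` and `Φ'(ξ) = 𝟙_{ξ ≥ L}`, the map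
`τ ↦ Φ²(|τ w + (1-τ) v₀|²)` is convex on `[0,1]`, and
`4 (Φ Φ')(|v₀|²) ⟨v₀, v₀ - w⟩ ≥ Φ²(|v₀|²) - Φ²(|w|²)`. -/
theorem stmt3 (n : ℕ) (L : ℝ) (hL : 0 ≤ L) (v₀ w : EuclideanSpace ℝ (Fin n)) :
    ConvexOn ℝ (Set.Icc (0:ℝ) 1)
      (fun τ : ℝ => (max (‖τ • w + (1 - τ) • v₀‖^2 - L) 0)^2) ∧
    (max (‖w‖^2 - L) 0)^2 - (max (‖v₀‖^2 - L) 0)^2 ≥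
      4 * (max (‖v₀‖^2 - L) 0) * (if L ≤ ‖v₀‖^2 then (1:ℝ) else 0) *
        (inner ℝ v₀ (w - v₀) : ℝ) ∧
    4 * (max (‖v₀‖^2 - L) 0) * (if L ≤ ‖v₀‖^2 then (1:ℝ) else 0) *
        (inner ℝ v₀ (v₀ - w) : ℝ) ≥
      (max (‖v₀‖^2 - L) 0)^2 - (max (‖w‖^2 - L) 0)^2 :=
  stmt3_general n L v₀ w
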